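/- arXiv:1204.6170 — 9 statements merged into one kernel-verified Lean document; each statement's English description precedes it below -/
import Mathlib

section
/- The invariant Iq7a is logically implied by Iq2, Iq3, and Iq7: assume (Iq2) for all q, r, withdraw q r + |q ∈ after r| + ack r q = |r ∈ wack q|; (Iq3) for all q, pc q ≥ 25 implies wack q = ∅; and (Iq7) for all q, r, either (notify q r = ⊥ and copy r q = none), or (pc q ≥ 26 and r ∈ nbh q), or withdraw q r > 0, or q ∈ after r. Then for all q, r with pc q = 25, one has notify q r = ⊥ and copy r q = none. -/
open Classical in
/-- The invariant Iq7a is logically implied by Iq2, Iq3, and Iq7. -/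
theorem Iq7a_of_Iq2_Iq3_Iq7 {Proc J : Type*} (jnone : J)
    (withdraw ack : Proc → Proc → ℕ)
    (after wack nbh : Proc → Set Proc) (pc : Proc → ℕ)
    (notify : Proc → Proc → Option J) (copy : Proc → Proc → J)
    (Iq2 : ∀ q r, withdraw q r + (if q ∈ after r then 1 else 0) + ack r q =
      (if r ∈ wack q then 1 else 0))
    (Iq3 : ∀ q, 25 ≤ pc q → wack q = ∅)
    (Iq7 : ∀ q r, (notify q r = none ∧ copy r q = jnone) ∨
      (26 ≤ pc q ∧ r ∈ nbh q) ∨ withdraw q r > 0 ∨ q ∈ after r) :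
    ∀ q r, pc q = 25 → notify q r = none ∧ copy r q = jnone := by
  intro q r hpc
  have hw : wack q = ∅ := Iq3 q (by omega)
  have h2 := Iq2 q r
  rw [hw] at h2
  simp only [Set.mem_empty_iff_false, if_false] at h2
  rcases Iq7 q r with h | h | h | h
  · exact h
  · omega
  · omega
  · simp [h] at h2
end

section
/- The derived invariant Mq0a follows from Mq0, Kq1, Kq3, and Lq6: assume (Mq0) for all q, r, s, pc q ≥ 23 implies q = r, or r ∈ nbh q, or hello r q > 0, or (pc r = 23 and q ∈ pack r), or L (job q) s + fun r s ≤ K, or (s ∈ curlist q and (answer s q = ⊥ or r lies in the set carried by answer s q)); (Kq1) for all q, r, hello q r + |welcome q r ≠ ⊥| = |pc q = 24 and r ∈ pack q|; (Kq3) for all q, pc q = 23 or curlist q = ∅; and (Lq6) for all q, s, pc q = 22 or s ∈ curlist q or L (job q) s ≤ fun q s. Then for all q, r with pc q ≥ 24, pc r ≥ 24, and pack r = ∅, one has q = r, or r ∈ nbh q, or job q and job r are compatible, i.e. ∀ c, job q c + job r c ≤ K. -/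
open Classical

/-- `L loc u s` is the maximum of `u c` over the resources `c` located at
site `s` (and `0` if there are none). -/
noncomputable def L {Rsc Site : Type*} [Fintype Rsc] (loc : Rsc → Site)
    (u : Rsc → ℕ) (s : Site) : ℕ :=
  (Finset.univ.filter (fun c => loc c = s)).sup u

/-- The derived invariant Mq0a follows from Mq0, Kq1, Kq3, and Lq6. -/
theorem Mq0a_of_Mq0_Kq1_Kq3_Lq6
    {Rsc Site Proc J' : Type*} [Fintype Rsc]
    (K : ℕ) (hK : 1 ≤ K) (loc : Rsc → Site)
    (pc : Proc → ℕ) (job : Proc → Rsc → ℕ)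
    (hjob : ∀ p c, job p c ≤ K)
    (fn : Proc → Site → ℕ)
    (nbh pack : Proc → Set Proc) (curlist : Proc → Set Site)
    (hello : Proc → Proc → ℕ)
    (welcome : Proc → Proc → Option J')
    (answer : Site → Proc → Option (Set Proc))
    (Mq0 : ∀ q r s, 23 ≤ pc q →
      q = r ∨ r ∈ nbh q ∨ hello r q > 0 ∨ (pc r = 23 ∧ q ∈ pack r) ∨
      L loc (job q) s + fn r s ≤ K ∨
      (s ∈ curlist q ∧ (answer s q = none ∨ ∃ A, answer s q = some A ∧ r ∈ A)))
    (Kq1 : ∀ q r, hello q r + (if welcome q r ≠ none then 1 else 0) =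
      (if pc q = 24 ∧ r ∈ pack q then 1 else 0))
    (Kq3 : ∀ q, pc q = 23 ∨ curlist q = ∅)
    (Lq6 : ∀ q s, pc q = 22 ∨ s ∈ curlist q ∨ L loc (job q) s ≤ fn q s) :
    ∀ q r, 24 ≤ pc q → 24 ≤ pc r → pack r = ∅ →
      q = r ∨ r ∈ nbh q ∨ ∀ c, job q c + job r c ≤ K := by

  intro q r hq hr hpack
  by_cases hqr : q = r
  · exact Or.inl hqr
  by_cases hnbh : r ∈ nbh q
  · exact Or.inr (Or.inl hnbh)
  refine Or.inr (Or.inr fun c => ?_)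
  set s := loc c with hs
  have hcur_q : curlist q = ∅ := by
    rcases Kq3 q with h | h
    · omega
    · exact h
  have hello0 : hello r q = 0 := by
    have := Kq1 r q
    rw [if_neg (show ¬(pc r = 24 ∧ q ∈ pack r) by simp [hpack])] at this
    omega
  rcases Mq0 q r s (by omega) with h | h | h | ⟨h, _⟩ | h | ⟨h, _⟩
  · exact absurd h hqr
  · exact absurd h hnbh
  · omega
  · omega
  · have h1 : job q c ≤ L loc (job q) s :=
      Finset.le_sup (by simp [hs])
    have h2 : job r c ≤ fn r s := by
      rcases Lq6 r s with h' | h' | h'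
      · omega
      · rcases Kq3 r with h'' | h''
        · omega
        · simp [h''] at h'
      · exact le_trans (Finset.le_sup (f := job r) (by simp [hs])) h'
    omega
  · simp [hcur_q] at h
end

section
/- The waiting invariant Waq0 is implied by Iq2 and Nq2: assume (Iq2) for all q, r, withdraw q r + |q ∈ after r| + ack r q = |r ∈ wack q|, and (Nq2) for all q, r, if notify q r = ⊥, copy r q = none, and welcome q r ∈ {⊥, some none}, then q ∉ after r and withdraw q r = 0. Then for all q, r: if withdraw q r = 0, ack r q = 0, notify q r = ⊥, welcome q r ∈ {⊥, some none}, and dAfter r q holds (i.e. q ∉ after r or copy r q = none), then r ∉ wack q. -/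
open Classical in
/-- The waiting invariant Waq0 is implied by Iq2 and Nq2. -/
theorem Waq0_of_Iq2_Nq2 {Proc J : Type*} (jnone : J)
    (withdraw ack : Proc → Proc → ℕ)
    (after wack : Proc → Set Proc)
    (notify welcome : Proc → Proc → Option J)
    (copy : Proc → Proc → J)
    (Iq2 : ∀ q r, withdraw q r + (if q ∈ after r then 1 else 0) + ack r q =
      (if r ∈ wack q then 1 else 0))
    (Nq2 : ∀ q r, notify q r = none → copy r q = jnone →
      (welcome q r = none ∨ welcome q r = some jnone) →
      q ∉ after r ∧ withdraw q r = 0) :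
    ∀ q r, withdraw q r = 0 → ack r q = 0 → notify q r = none →
      (welcome q r = none ∨ welcome q r = some jnone) →
      (q ∉ after r ∨ copy r q = jnone) → r ∉ wack q := by
  intro q r hw ha hn hwel hd
  have hna : q ∉ after r := by
    rcases hd with h | h
    · exact h
    · exact (Nq2 q r hn h hwel).1
  have := Iq2 q r
  simp [hw, ha, hna] at this
  intro hmem
  simp [hmem] at this
end

section
/- The waiting invariant Waq1 is implied by Kq7, Lq2, Mq2, Nq4 together with Iq4, Iq5, Iq7, and Iq8: assume (Kq7) for all q, r, welcome q r ∈ {⊥, some none} or (notify q r = ⊥ and copy r q = none); (Lq2) for all q, r, q ∈ prio r implies pc r = 25 and q ∉ after r; (Mq2) for all q, r, pc q ≥ 26 and r ∈ nbh q imply r ∈ nbh0 q, or welcome q r = some (job q), or copy r q = job q; (Nq4) for all q, r, q ∈ prio r implies ¬(copy r q * job r); (Iq4) for all q, r, r ∈ nbh0 q and notify q r = ⊥ imply copy r q = job q; (Iq5) for all q, job q = none iff pc q = 21; (Iq7) for all q, r, either (notify q r = ⊥ and copy r q = none), or (pc q ≥ 26 and r ∈ nbh q), or withdraw q r > 0,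 or q ∈ after r; (Iq8) for all q, r, notify q r = ⊥ or copy r q = none. Then for all q, r: if r ∈ prio q, withdraw r q = 0, and welcome q r ∈ {⊥, some none}, then pc r ≥ 26 and ¬(job q * job r). -/
/-- The waiting invariant Waq1 is implied by Kq7, Lq2, Mq2, Nq4 together with
Iq4, Iq5, Iq7, and Iq8. -/
theorem Waq1_of_invariants {Proc J : Type*} (jnone : J)
    (compat : J → J → Prop)
    (hsym : ∀ u v, compat u v ↔ compat v u)
    (hnone : ∀ u, compat jnone u)
    (pc : Proc → ℕ) (prio after nbh nbh0 : Proc → Set Proc)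
    (job : Proc → J) (copy : Proc → Proc → J)
    (withdraw : Proc → Proc → ℕ)
    (notify welcome : Proc → Proc → Option J)
    (Kq7 : ∀ q r, (welcome q r = none ∨ welcome q r = some jnone) ∨
      (notify q r = none ∧ copy r q = jnone))
    (Lq2 : ∀ q r, q ∈ prio r → pc r = 25 ∧ q ∉ after r)
    (Mq2 : ∀ q r, 26 ≤ pc q → r ∈ nbh q →
      r ∈ nbh0 q ∨ welcome q r = some (job q) ∨ copy r q = job q)
    (Nq4 : ∀ q r, q ∈ prio r → ¬ compat (copy r q) (job r))
    (Iq4 : ∀ q r, r ∈ nbh0 q → notify q r = none → copy r q = job q)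
    (Iq5 : ∀ q, job q = jnone ↔ pc q = 21)
    (Iq7 : ∀ q r, (notify q r = none ∧ copy r q = jnone) ∨
      (26 ≤ pc q ∧ r ∈ nbh q) ∨ withdraw q r > 0 ∨ q ∈ after r)
    (Iq8 : ∀ q r, notify q r = none ∨ copy r q = jnone) :
    ∀ q r, r ∈ prio q → withdraw r q = 0 →
      (welcome q r = none ∨ welcome q r = some jnone) →
      26 ≤ pc r ∧ ¬ compat (job q) (job r) := by
  intro q r hprio hw hwel
  obtain ⟨hpcq, hafter⟩ := Lq2 r q hprio
  have hN : ¬ compat (copy q r) (job q) := Nq4 r q hprio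
  have hcnz : copy q r ≠ jnone := by
    intro h; exact hN (h ▸ hnone (job q))
  have h7 := Iq7 r q
  rcases h7 with ⟨_, hc⟩ | ⟨hpc, hnbh⟩ | hwd | haf
  · exact absurd hc hcnz
  · refine ⟨hpc, ?_⟩
    have hcopy : copy q r = job r := by
      rcases Mq2 r q hpc hnbh with h0 | hwq | hcq
      · rcases Iq8 r q with hn | hc
        · exact Iq4 r q h0 hn
        · exact absurd hc hcnz
      · rcases Kq7 r q with (h | h) | ⟨_, hc⟩
        · rw [h] at hwq; exact absurd hwq (by simp)
        · rw [h] at hwq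
          have : job r = jnone := by injection hwq.symm
          have := (Iq5 r).mp this
          omega
        · exact absurd hc hcnz
      · exact hcq
    rw [← hcopy]
    intro h
    exact hN ((hsym _ _).mp h)
  · omega
  · exact absurd haf hafter
end

section
/- The waiting invariant Waq2 is implied by Nq0, Nq1, Iq1, Jq0, and Jq7: assume (Nq0) for all q, r with q < r, q ∈ need r implies q ∈ away r; (Nq1) for all q, r with q < r, q ∈ need r and job q * job r imply withdraw q r > 0; (Iq1) for all q, r, r ∈ nbh0 q implies pc q ≥ 26 and r ∈ nbh q; (Jq0) for all q, r, r ∈ need q implies pc q = 26 and r ∈ nbh0 q; (Jq7) for all q, r, q ∈ away r and withdraw q r = 0 imply r ∈ nbh0 q. Then for all q, r: if r < q, r ∈ need q, and withdraw r q = 0, then pc r ≥ 26 and ¬(job q * job r). -/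
/-- The waiting invariant Waq2 is implied by Nq0, Nq1, Iq1, Jq0, and Jq7. -/
theorem Waq2_of_invariants {J : Type*}
    (compat : J → J → Prop)
    (hsym : ∀ u v, compat u v ↔ compat v u)
    (pc : ℕ → ℕ) (need away nbh nbh0 : ℕ → Set ℕ)
    (job : ℕ → J) (withdraw : ℕ → ℕ → ℕ)
    (Nq0 : ∀ q r, q < r → q ∈ need r → q ∈ away r)
    (Nq1 : ∀ q r, q < r → q ∈ need r → compat (job q) (job r) →
      withdraw q r > 0)
    (Iq1 : ∀ q r, r ∈ nbh0 q → 26 ≤ pc q ∧ r ∈ nbh q)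
    (Jq0 : ∀ q r, r ∈ need q → pc q = 26 ∧ r ∈ nbh0 q)
    (Jq7 : ∀ q r, q ∈ away r → withdraw q r = 0 → r ∈ nbh0 q) :
    ∀ q r, r < q → r ∈ need q → withdraw r q = 0 →
      26 ≤ pc r ∧ ¬ compat (job q) (job r) := by
  intro q r hlt hneed hw
  have haway := Nq0 r q hlt hneed
  have hnbh0 := Jq7 r q haway hw
  refine ⟨(Iq1 r q hnbh0).1, fun hc => ?_⟩
  have := Nq1 r q hlt hneed ((hsym (job q) (job r)).mp hc)
  omega
end

section
/- The waiting invariant Waq3 is implied by Iq4, Iq5, Jq0, and Jq2: assume (Iq4) for all q, r, r ∈ nbh0 q and notify q r = ⊥ imply copy r q = job q; (Iq5) for all q, job q = none iff pc q = 21; (Jq0) for all q, r, r ∈ need q implies pc q = 26 and r ∈ nbh0 q; (Jq2) for all q, r with q < r, |notify q r ≠ ⊥| + |q ∈ prom r| + gra r q = |r ∈ need q|. Then for all q, r: if q < r, r ∈ need q, gra r q = 0, notify q r = ⊥, and dProm r q holds (i.e. q ∉ prom r, or pc r ≥ 27 and ¬(job r * copy r q)), then pc r ≥ 27 and ¬(job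 q * job r). -/
open Classical in
/-- The waiting invariant Waq3 is implied by Iq4, Iq5, Jq0, and Jq2. -/
theorem Waq3_of_invariants {J : Type*} (jnone : J)
    (compat : J → J → Prop)
    (hsym : ∀ u v, compat u v ↔ compat v u)
    (pc : ℕ → ℕ) (need prom nbh0 : ℕ → Set ℕ)
    (job : ℕ → J) (copy : ℕ → ℕ → J)
    (gra : ℕ → ℕ → ℕ) (notify : ℕ → ℕ → Option J)
    (Iq4 : ∀ q r, r ∈ nbh0 q → notify q r = none → copy r q = job q)
    (Iq5 : ∀ q, job q = jnone ↔ pc q = 21)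
    (Jq0 : ∀ q r, r ∈ need q → pc q = 26 ∧ r ∈ nbh0 q)
    (Jq2 : ∀ q r, q < r →
      (if notify q r ≠ none then 1 else 0) + (if q ∈ prom r then 1 else 0) +
        gra r q = (if r ∈ need q then 1 else 0)) :
    ∀ q r, q < r → r ∈ need q → gra r q = 0 → notify q r = none →
      (q ∉ prom r ∨ (27 ≤ pc r ∧ ¬ compat (job r) (copy r q))) →
      27 ≤ pc r ∧ ¬ compat (job q) (job r) := by
  intro q r hqr hneed hgra hnot hd
  have h2 := Jq2 q r hqr
  rw [if_pos hneed, hgra] at h2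
  simp only [hnot, ne_eq, not_true_eq_false, if_false] at h2
  have hprom : q ∈ prom r := by by_contra h; simp [h] at h2
  have hcopy : copy r q = job q := Iq4 q r (Jq0 q r hneed).2 hnot
  rcases hd with h | ⟨h1, h2'⟩
  · exact absurd hprom h
  · exact ⟨h1, fun hc => h2' (by rw [hcopy]; exact (hsym _ _).mp hc)⟩
end

section
/- Combinatorial core of the absence of localized deadlock (Theorem 2): let W be a nonempty set of processes such that (i) every q ∈ W has pc q ∈ {21, 25, 26}; (ii) some q ∈ W has pc q ≠ 21; (iii) every q ∈ W with pc q = 25 has prio q ≠ ∅ and every q ∈ W with pc q = 26 has need q ≠ ∅; (iv) (Wax1) for every q ∈ W and every r ∈ prio q, pc r ≥ 26 and con q r; (v) (Wax2) for every q ∈ W and every r < q with r ∈ need q, pc r ≥ 26 and con q r; (vi) (Wax3) for every q ∈ W and every r > q with r ∈ need q, pc r ≥ 27 and con q r; (vii) for every q ∈ W, q ∉ need q. Then there exist processes q ∈ W and r ∉ W with con q r. -/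
/-- Combinatorial core of the absence of localized deadlock (Theorem 2). -/
theorem no_localized_deadlock
    (pc : ℕ → ℕ) (need prio : ℕ → Set ℕ) (con : ℕ → ℕ → Prop)
    (W : Set ℕ) (hW : W.Nonempty)
    (h1 : ∀ q ∈ W, pc q = 21 ∨ pc q = 25 ∨ pc q = 26)
    (h2 : ∃ q ∈ W, pc q ≠ 21)
    (h3 : (∀ q ∈ W, pc q = 25 → (prio q).Nonempty) ∧
          (∀ q ∈ W, pc q = 26 → (need q).Nonempty))
    (Wax1 : ∀ q ∈ W, ∀ r ∈ prio q, 26 ≤ pc r ∧ con q r)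
    (Wax2 : ∀ q ∈ W, ∀ r, r < q → r ∈ need q → 26 ≤ pc r ∧ con q r)
    (Wax3 : ∀ q ∈ W, ∀ r, q < r → r ∈ need q → 27 ≤ pc r ∧ con q r)
    (h7 : ∀ q ∈ W, q ∉ need q) :
    ∃ q ∈ W, ∃ r ∉ W, con q r := by
  classical
  by_contra hcon
  push_neg at hcon
  have hmem : ∀ q ∈ W, ∀ r, con q r → r ∈ W := by
    intro q hq r hc
    by_contra hr
    exact hcon q hq r hr hc
  have hex : ∃ q, q ∈ W ∧ pc q = 26 := by
    obtain ⟨q, hq, hq21⟩ := h2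
    rcases h1 q hq with h | h | h
    · exact absurd h hq21
    · obtain ⟨r, hr⟩ := h3.1 q hq h
      obtain ⟨hge, hc⟩ := Wax1 q hq r hr
      have hrW := hmem q hq r hc
      exact ⟨r, hrW, by rcases h1 r hrW with h' | h' | h' <;> omega⟩
    · exact ⟨q, hq, h⟩
  set q := Nat.find hex with hqdef
  obtain ⟨hqW, hq26⟩ := Nat.find_spec hex
  obtain ⟨r, hr⟩ := h3.2 q hqW hq26
  rcases lt_trichotomy r q with hlt | heq | hgt
  · obtain ⟨hge, hc⟩ := Wax2 q hqW r hlt hr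
    have hrW := hmem q hqW r hc
    have hr26 : pc r = 26 := by rcases h1 r hrW with h' | h' | h' <;> omega
    exact Nat.find_min hex hlt ⟨hrW, hr26⟩
  · exact h7 q hqW (heq ▸ hr)
  · obtain ⟨hge, hc⟩ := Wax3 q hqW r hgt hr
    have hrW := hmem q hqW r hc
    rcases h1 r hrW with h' | h' | h' <;> omega
end

section
/- Localized progress at line 26 (Formula (8)): let W ⊆ ℕ be nonempty and suppose: (A) for every p ∈ W, if there is N with pc p n = 26 for all n ≥ N, then there exist q ≠ p and N with q ∈ need p n for all n ≥ N; (B) for every p ∈ W and q < p, if there is N with q ∈ need p n for all n ≥ N, then there is N with (pc q n ≥ 26 and con p q n) for all n ≥ N; (C) for every p ∈ W and q > p, if there is N with q ∈ need p n for all n ≥ N, then there is N with (pc q n ≥ 27 and con p q n) for all n ≥ N; (D) for every r ∈ W, if there is N with pc r n ≥ 26 for all n ≥ N, then there is N with pc r n = 26 for all n ≥ N. If some p ∈ W satisfies: there is N with pc p n = 26 for all n ≥ N, then there exist q ∈ W and r ∉ W and N such that con q r n holds for all n ≥ N. -/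
/-- Localized progress at line 26 (Formula (8)): if some process of `W`
remains eternally at line 26, then some process of `W` is eventually in
eternal conflict with a process outside `W`. -/
theorem localized_progress_at_26
    (pc : ℕ → ℕ → ℕ) (need : ℕ → ℕ → Set ℕ) (con : ℕ → ℕ → ℕ → Prop)
    (W : Set ℕ) (hW : W.Nonempty)
    (hA : ∀ p ∈ W, (∃ N, ∀ n ≥ N, pc p n = 26) →
      ∃ q, q ≠ p ∧ ∃ N, ∀ n ≥ N, q ∈ need p n)
    (hB : ∀ p ∈ W, ∀ q, q < p → (∃ N, ∀ n ≥ N, q ∈ need p n) →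
      ∃ N, ∀ n ≥ N, 26 ≤ pc q n ∧ con p q n)
    (hC : ∀ p ∈ W, ∀ q, p < q → (∃ N, ∀ n ≥ N, q ∈ need p n) →
      ∃ N, ∀ n ≥ N, 27 ≤ pc q n ∧ con p q n)
    (hD : ∀ r ∈ W, (∃ N, ∀ n ≥ N, 26 ≤ pc r n) →
      ∃ N, ∀ n ≥ N, pc r n = 26)
    (hp : ∃ p ∈ W, ∃ N, ∀ n ≥ N, pc p n = 26) :
    ∃ q ∈ W, ∃ r ∉ W, ∃ N, ∀ n ≥ N, con q r n := by
  classical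
  -- S: processes of W eternally at 26
  set S : Set ℕ := {p | p ∈ W ∧ ∃ N, ∀ n ≥ N, pc p n = 26} with hSdef
  have hSne : S.Nonempty := by
    obtain ⟨p, hpW, hN⟩ := hp
    exact ⟨p, hpW, hN⟩
  obtain ⟨p, hpS, hmin⟩ := Nat.lt_wfRel.wf.has_min S hSne
  obtain ⟨hpW, hp26⟩ := hpS
  obtain ⟨q, hqp, hneed⟩ := hA p hpW hp26
  rcases lt_or_gt_of_ne hqp with hlt | hgt
  · -- q < p
    obtain ⟨N, hN⟩ := hB p hpW q hlt hneed
    by_cases hqW : q ∈ W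
    · -- q ∈ W would be a smaller element of S
      have hq26 : ∃ N, ∀ n ≥ N, pc q n = 26 :=
        hD q hqW ⟨N, fun n hn => (hN n hn).1⟩
      exact absurd hlt (hmin q ⟨hqW, hq26⟩)
    · exact ⟨p, hpW, q, hqW, N, fun n hn => (hN n hn).2⟩
  · -- p < q
    obtain ⟨N, hN⟩ := hC p hpW q hgt hneed
    by_cases hqW : q ∈ W
    · -- q would be both = 26 and ≥ 27 eventually
      obtain ⟨M, hM⟩ := hD q hqW ⟨N, fun n hn => le_trans (by norm_num) (hN n hn).1⟩
      have h1 := (hN (max N M) (le_max_left _ _)).1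
      have h2 := hM (max N M) (le_max_right _ _)
      omega
    · exact ⟨p, hpW, q, hqW, N, fun n hn => (hN n hn).2⟩
end

section
/- Localized progress at line 25 (Formula (9)): let W ⊆ ℕ be nonempty and suppose hypotheses (A)–(D) of the line-26 progress lemma hold, together with: (E) for every p ∈ W, if there is N with pc p n = 25 for all n ≥ N, then there exist q and N with (pc q n ≥ 26 and con p q n) for all n ≥ N. If some p ∈ W satisfies: there is N with pc p n = 25 for all n ≥ N, then there exist q ∈ W and r ∉ W and N such that con q r n holds for all n ≥ N. (Hypotheses (A)–(D): (A) for every p ∈ W, if pc p is eventually always 26 then some q ≠ p is eventually always in need p; (B) for every p ∈ W and q < p, if q is eventually always in need p then eventually always pc q ≥ 26 and con p q; (C) for every p ∈ W and q > p, if q is eventually always in need p then eventually always pc q ≥ 27 and con p q; (D) for every r ∈ W, if eventually always pc r ≥ 26 then eventually always pc r = 26.) -/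
/-- Localized progress at line 25 (Formula (9)): if some process of `W`
remains eternally at line 25, then some process of `W` is eventually in
eternal conflict with a process outside `W`. -/
theorem localized_progress_at_25
    (pc : ℕ → ℕ → ℕ) (need : ℕ → ℕ → Set ℕ) (con : ℕ → ℕ → ℕ → Prop)
    (W : Set ℕ) (hW : W.Nonempty)
    (hA : ∀ p ∈ W, (∃ N, ∀ n ≥ N, pc p n = 26) →
      ∃ q, q ≠ p ∧ ∃ N, ∀ n ≥ N, q ∈ need p n)
    (hB : ∀ p ∈ W, ∀ q, q < p → (∃ N, ∀ n ≥ N, q ∈ need p n) →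
      ∃ N, ∀ n ≥ N, 26 ≤ pc q n ∧ con p q n)
    (hC : ∀ p ∈ W, ∀ q, p < q → (∃ N, ∀ n ≥ N, q ∈ need p n) →
      ∃ N, ∀ n ≥ N, 27 ≤ pc q n ∧ con p q n)
    (hD : ∀ r ∈ W, (∃ N, ∀ n ≥ N, 26 ≤ pc r n) →
      ∃ N, ∀ n ≥ N, pc r n = 26)
    (hE : ∀ p ∈ W, (∃ N, ∀ n ≥ N, pc p n = 25) →
      ∃ q, ∃ N, ∀ n ≥ N, 26 ≤ pc q n ∧ con p q n)
    (hp : ∃ p ∈ W, ∃ N, ∀ n ≥ N, pc p n = 25) :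
    ∃ q ∈ W, ∃ r ∉ W, ∃ N, ∀ n ≥ N, con q r n := by
  classical
  obtain ⟨p, hpW, hp25⟩ := hp
  obtain ⟨q, N, hq⟩ := hE p hpW hp25
  by_cases hqW : q ∈ W
  · -- the set of W-processes eventually at ≥ 26 is nonempty
    set S : Set ℕ := {r | r ∈ W ∧ ∃ N, ∀ n ≥ N, 26 ≤ pc r n} with hS
    have hqS : q ∈ S := ⟨hqW, N, fun n hn => (hq n hn).1⟩
    obtain ⟨m, hmS, hmin⟩ := Nat.lt_wfRel.wf.has_min S ⟨q, hqS⟩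
    obtain ⟨hmW, hm26⟩ := hmS
    have hm26' := hD m hmW hm26
    obtain ⟨q', hq'ne, hneed⟩ := hA m hmW hm26'
    rcases lt_or_gt_of_ne hq'ne with hlt | hgt
    · -- q' < m : use hB
      obtain ⟨N', hconf⟩ := hB m hmW q' hlt hneed
      refine ⟨m, hmW, q', ?_, N', fun n hn => (hconf n hn).2⟩
      intro hq'W
      exact hmin q' ⟨hq'W, N', fun n hn => (hconf n hn).1⟩ hlt
    · -- m < q' : use hC
      obtain ⟨N', hconf⟩ := hC m hmW q' hgt hneed
      refine ⟨m, hmW, q', ?_, N', fun n hn => (hconf n hn).2⟩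
      intro hq'W
      obtain ⟨N'', h26⟩ := hD q' hq'W ⟨N', fun n hn => le_trans (by norm_num) (hconf n hn).1⟩
      have h1 := h26 (max N' N'') (le_max_right _ _)
      have h2 := (hconf (max N' N'') (le_max_left _ _)).1
      omega
  · exact ⟨p, hpW, q, hqW, N, fun n hn => (hq n hn).2⟩
end
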